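/- Let X be a topological space, Y a totally disconnected compact Hausdorff topological space, and f : X → Y a continuous map. Then there exists a unique continuous map g : UF(X) → Y such that f = g ∘ F(·), where F(·) : X → UF(X) is the map sending each point to its principal ultrafilter. In other words, UF(X) together with F(·) is the universal totally disconnected Hausdorff compactification of X. -/

import Mathlib

open Set Topology BoundedContinuousFunction

/-- An ultrafilter of the Boolean algebra `CO(X)` of clopen subsets of `X`: a family of
clopen sets not containing `∅`, closed under binary intersections, upward closed (within
clopen sets), and containing `U` or `Uᶜ` for every clopen `U`. -/
structure ClopenUltrafilter (X : Type*) [TopologicalSpace X] where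
  sets : Set (Set X)
  isClopen_of_mem : ∀ U ∈ sets, IsClopen U
  empty_not_mem : ∅ ∉ sets
  inter_mem : ∀ U ∈ sets, ∀ V ∈ sets, U ∩ V ∈ sets
  mem_of_superset : ∀ U ∈ sets, ∀ V : Set X, IsClopen V → U ⊆ V → V ∈ sets
  mem_or_compl_mem : ∀ U : Set X, IsClopen U → U ∈ sets ∨ Uᶜ ∈ sets

/-- The topology on `UF(X)` with open basis the sets `{F : U ∈ F}` for `U` clopen. -/
instance (X : Type*) [TopologicalSpace X] : TopologicalSpace (ClopenUltrafilter X) :=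
  TopologicalSpace.generateFrom
    {S | ∃ U : Set X, IsClopen U ∧ S = {F : ClopenUltrafilter X | U ∈ F.sets}}

/-- The principal ultrafilter of clopen sets at a point `x`. -/
def principalCU (X : Type*) [TopologicalSpace X] (x : X) : ClopenUltrafilter X where
  sets := {U : Set X | IsClopen U ∧ x ∈ U}
  isClopen_of_mem := fun _ hU => hU.1
  empty_not_mem := fun h => Set.notMem_empty x h.2
  inter_mem := fun U hU V hV => ⟨hU.1.inter hV.1, hU.2, hV.2⟩
  mem_of_superset := fun U hU V hV hUV => ⟨hV, hUV hU.2⟩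
  mem_or_compl_mem := fun U hU => by
    by_cases hx : x ∈ U
    · exact Or.inl ⟨hU, hx⟩
    · exact Or.inr ⟨hU.compl, hx⟩

/-- A cluster point of an ultrafilter of clopen sets: a point all of whose clopen
neighbourhoods belong to the ultrafilter. -/
def ClopenUltrafilter.IsClusterPoint {X : Type*} [TopologicalSpace X]
    (F : ClopenUltrafilter X) (x : X) : Prop :=
  ∀ U : Set X, IsClopen U → x ∈ U → U ∈ F.sets

/-!
A clopen ultrafilter `F` of `X` is pushed forward along `f` to the clopen ultrafilter
`{V | f⁻¹ V ∈ F}` of `Y`. In a compact totally separated space every clopen ultrafilter has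
exactly one cluster point: the intersection of its members is nonempty by compactness, and two
distinct points are split by a clopen set. Sending `F` to the cluster point of its pushforward
is the required extension; it is continuous because the clopen sets of `Y` form a basis, and
unique because the principal ultrafilters are dense in `UF(X)`.
-/

namespace ClopenUltrafilter

section Basic

variable {X : Type*} [TopologicalSpace X]

theorem ext_sets {F G : ClopenUltrafilter X} (h : F.sets = G.sets) : F = G := by
  cases F; cases G; cases h; rfl

theorem univ_mem (F : ClopenUltrafilter X) : univ ∈ F.sets := by
  simpa using (F.mem_or_compl_mem ∅ isClopen_empty).resolve_left F.empty_not_mem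

theorem nonempty_of_mem {F : ClopenUltrafilter X} {U : Set X} (h : U ∈ F.sets) :
    U.Nonempty :=
  nonempty_iff_ne_empty.2 fun hU => F.empty_not_mem (hU ▸ h)

theorem compl_mem_iff_notMem (F : ClopenUltrafilter X) {U : Set X} (hU : IsClopen U) :
    Uᶜ ∈ F.sets ↔ U ∉ F.sets := by
  refine ⟨fun hc h => F.empty_not_mem ?_, (F.mem_or_compl_mem U hU).resolve_left⟩
  simpa using F.inter_mem U h Uᶜ hc

theorem isOpen_setOf_mem {U : Set X} (hU : IsClopen U) :
    IsOpen {F : ClopenUltrafilter X | U ∈ F.sets} :=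
  TopologicalSpace.GenerateOpen.basic _ ⟨U, hU, rfl⟩

theorem isTopologicalBasis :
    TopologicalSpace.IsTopologicalBasis
      {S | ∃ U : Set X, IsClopen U ∧ S = {F : ClopenUltrafilter X | U ∈ F.sets}} := by
  refine ⟨?_, ?_, rfl⟩
  · rintro _ ⟨U, hU, rfl⟩ _ ⟨V, hV, rfl⟩ F ⟨hFU, hFV⟩
    refine ⟨_, ⟨U ∩ V, hU.inter hV, rfl⟩, F.inter_mem U hFU V hFV, fun G hG => ?_⟩
    exact ⟨G.mem_of_superset _ hG U hU inter_subset_left,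
      G.mem_of_superset _ hG V hV inter_subset_right⟩
  · exact sUnion_eq_univ_iff.2 fun F => ⟨_, ⟨univ, isClopen_univ, rfl⟩, F.univ_mem⟩

theorem denseRange_principalCU : DenseRange (principalCU X) := by
  rw [DenseRange, isTopologicalBasis.dense_iff]
  rintro _ ⟨U, hU, rfl⟩ ⟨F, hF⟩
  obtain ⟨x, hx⟩ := nonempty_of_mem hF
  exact ⟨principalCU X x, ⟨hU, hx⟩, x, rfl⟩

theorem isClusterPoint_principalCU (x : X) : (principalCU X x).IsClusterPoint x :=
  fun _ hU hx => ⟨hU, hx⟩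

theorem IsClusterPoint.mem_iff {F : ClopenUltrafilter X} {x : X} (hx : F.IsClusterPoint x)
    {U : Set X} (hU : IsClopen U) : x ∈ U ↔ U ∈ F.sets := by
  refine ⟨hx U hU, fun h => by_contra fun hxU => ?_⟩
  exact (F.compl_mem_iff_notMem hU).1 (hx Uᶜ hU.compl hxU) h

theorem IsClusterPoint.eq [TotallySeparatedSpace X] {F : ClopenUltrafilter X} {x y : X}
    (hx : F.IsClusterPoint x) (hy : F.IsClusterPoint y) : x = y := by
  by_contra hxy
  obtain ⟨U, hU, hxU, hyU⟩ := exists_isClopen_of_totally_separated hxy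
  exact (F.compl_mem_iff_notMem hU).1 (hy Uᶜ hU.compl hyU) (hx U hU hxU)

theorem exists_isClusterPoint [CompactSpace X] (F : ClopenUltrafilter X) :
    ∃ x, F.IsClusterPoint x := by
  have : Nonempty F.sets := ⟨⟨univ, F.univ_mem⟩⟩
  obtain ⟨x, hx⟩ := IsCompact.nonempty_sInter_of_directed_nonempty_isCompact_isClosed
    (fun U hU V hV => ⟨U ∩ V, F.inter_mem U hU V hV, inter_subset_left, inter_subset_right⟩)
    (fun _ => nonempty_of_mem)
    (fun U hU => (F.isClopen_of_mem U hU).isClosed.isCompact)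
    (fun U hU => (F.isClopen_of_mem U hU).isClosed)
  refine ⟨x, fun U hU hxU => by_contra fun hFU => ?_⟩
  exact hx Uᶜ ((F.compl_mem_iff_notMem hU).2 hFU) hxU

end Basic

section Map

variable {X Y : Type*} [TopologicalSpace X] [TopologicalSpace Y] {f : X → Y}

def map (hf : Continuous f) (F : ClopenUltrafilter X) : ClopenUltrafilter Y where
  sets := {V | IsClopen V ∧ f ⁻¹' V ∈ F.sets}
  isClopen_of_mem _ hV := hV.1
  empty_not_mem h := F.empty_not_mem h.2
  inter_mem _ hU _ hV := ⟨hU.1.inter hV.1, F.inter_mem _ hU.2 _ hV.2⟩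
  mem_of_superset _ hU _ hV hUV :=
    ⟨hV, F.mem_of_superset _ hU.2 _ (hV.preimage hf) (preimage_mono hUV)⟩
  mem_or_compl_mem _ hV := (F.mem_or_compl_mem _ (hV.preimage hf)).imp
    (fun h => ⟨hV, h⟩) (fun h => ⟨hV.compl, h⟩)

theorem map_principalCU (hf : Continuous f) (x : X) :
    map hf (principalCU X x) = principalCU Y (f x) :=
  ext_sets <| Set.ext fun _ =>
    ⟨fun ⟨hV, _, hx⟩ => ⟨hV, hx⟩, fun ⟨hV, hx⟩ => ⟨hV, hV.preimage hf, hx⟩⟩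

theorem continuous_map (hf : Continuous f) : Continuous (map hf) := by
  refine continuous_generateFrom_iff.2 ?_
  rintro _ ⟨V, hV, rfl⟩
  have : map hf ⁻¹' {G | V ∈ G.sets} = {F | f ⁻¹' V ∈ F.sets} :=
    Set.ext fun F => and_iff_right hV
  exact this ▸ isOpen_setOf_mem (hV.preimage hf)

end Map

section Limit

variable {Y : Type*} [TopologicalSpace Y] [CompactSpace Y]

noncomputable def lim (F : ClopenUltrafilter Y) : Y :=
  F.exists_isClusterPoint.choose

theorem isClusterPoint_lim (F : ClopenUltrafilter Y) : F.IsClusterPoint F.lim :=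
  F.exists_isClusterPoint.choose_spec

theorem lim_principalCU [TotallySeparatedSpace Y] (y : Y) : (principalCU Y y).lim = y :=
  (isClusterPoint_lim _).eq (isClusterPoint_principalCU y)

theorem continuous_lim [T2Space Y] [TotallyDisconnectedSpace Y] :
    Continuous (lim : ClopenUltrafilter Y → Y) := by
  refine isTopologicalBasis_isClopen.continuous_iff.2 fun V (hV : IsClopen V) => ?_
  have : lim ⁻¹' V = {F : ClopenUltrafilter Y | V ∈ F.sets} :=
    Set.ext fun F => F.isClusterPoint_lim.mem_iff hV
  exact this ▸ isOpen_setOf_mem hV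

end Limit

end ClopenUltrafilter

/-- `UF(X)` together with the principal-ultrafilter map is the universal
totally disconnected Hausdorff compactification of `X`: every continuous map from `X` to a
totally disconnected compact Hausdorff space `Y` factors uniquely through a continuous map
`UF(X) → Y`. -/
theorem clopenUltrafilter_universal_property (X : Type*) [TopologicalSpace X]
    (Y : Type*) [TopologicalSpace Y] [CompactSpace Y] [T2Space Y]
    [TotallyDisconnectedSpace Y] (f : X → Y) (hf : Continuous f) :
    ∃! g : ClopenUltrafilter X → Y, Continuous g ∧ f = g ∘ principalCU X := by
  let g := ClopenUltrafilter.lim ∘ ClopenUltrafilter.map hf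
  have hg : Continuous g :=
    ClopenUltrafilter.continuous_lim.comp (ClopenUltrafilter.continuous_map hf)
  have hfactor : f = g ∘ principalCU X := funext fun x => by
    simp only [g, Function.comp_apply, ClopenUltrafilter.map_principalCU,
      ClopenUltrafilter.lim_principalCU]
  refine ⟨g, ⟨hg, hfactor⟩, fun g' ⟨hg', hg'f⟩ => ?_⟩
  exact ClopenUltrafilter.denseRange_principalCU.equalizer hg' hg (hg'f ▸ hfactor)
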